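/- arXiv:1212.0458 — 8 statements merged into one kernel-verified Lean document; each statement's English description precedes it below -/
import Mathlib

section
/- Let G be an Abelian group and A a finite nonempty subset of G with |A+A| ≤ K|A| for some real K < 1.5. Then there exists a finite subgroup H of G with |H| ≤ K|A| such that A is contained in a single coset of H. -/
/-!
If `d = u - v` with `u, v ∈ A`, the translates `u + A` and `v + A` both lie in `A + A`, so they
share more than `|A| / 2` points; equivalently `A ∩ (A - d)` has more than half of `A`. Two such
sets therefore meet, which makes `A - A` closed under addition, i.e. a subgroup `H`, and `A` lies in
the coset `a + H` for any `a ∈ A`. Comparing `A - a` with `h - (A - a)` inside `H` in the same way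
shows that `A + A = 2a + H`, so `|H| = |A + A| ≤ K|A|`.
-/

open Pointwise Finset

namespace Finset

theorem exists_subgroup_card_eq_card_mul_of_doubling_lt_three_halves {G : Type*} [Group G]
    [DecidableEq G] {A : Finset G} (h : #(A * A) < (3 / 2 : ℚ) * #A) {a : G} (ha : a ∈ A) :
    ∃ H : Subgroup G, (H : Set G).Finite ∧ Nat.card H = #(A * A) ∧
      (A : Set G) ⊆ a • (H : Set G) := by
  have hH : (invMulSubgroup A h : Set G) = ↑(A⁻¹ * A) := by
    rw [invMulSubgroup_eq_inv_mul, coe_mul, coe_inv]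
  refine ⟨invMulSubgroup A h, hH ▸ finite_toSet _, ?_, fun x hx ↦ ?_⟩
  · rw [← SetLike.coe_sort_coe, hH, Nat.card_coe_set_eq, Set.ncard_coe_finset,
      card_inv_mul_of_doubling_lt_three_halves h]
  · refine ⟨a⁻¹ * x, ?_, mul_inv_cancel_left a x⟩
    rw [hH, mem_coe]
    exact mul_mem_mul (inv_mem_inv ha) hx

theorem exists_addSubgroup_card_eq_card_add_of_doubling_lt_three_halves {G : Type*} [AddGroup G]
    [DecidableEq G] {A : Finset G} (h : #(A + A) < (3 / 2 : ℚ) * #A) {a : G} (ha : a ∈ A) :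
    ∃ H : AddSubgroup G, (H : Set G).Finite ∧ Nat.card H = #(A + A) ∧
      (A : Set G) ⊆ a +ᵥ (H : Set G) := by
  set B : Finset (Multiplicative G) := A.map Multiplicative.ofAdd.toEmbedding
  have hBB : B * B = (A + A).map Multiplicative.ofAdd.toEmbedding := by
    ext x
    simp [B, mem_mul, mem_add, ← ofAdd_add, ← Equiv.eq_symm_apply]
  have hB : #(B * B) < (3 / 2 : ℚ) * #B := by simpa [hBB, B] using h
  obtain ⟨H, hfin, hcard, hsub⟩ :=
    exists_subgroup_card_eq_card_mul_of_doubling_lt_three_halves hB (a := .ofAdd a) (by simpa [B])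
  refine ⟨H.toAddSubgroup', hfin, ?_, fun x hx ↦ ?_⟩
  · rw [hBB, card_map] at hcard
    exact hcard
  · obtain ⟨y, hy, hxy⟩ := hsub (mem_map_of_mem _ hx)
    exact ⟨y.toAdd, hy, congrArg Multiplicative.toAdd hxy⟩

end Finset

theorem freiman_small_doubling {G : Type*} [AddCommGroup G] [DecidableEq G]
    (A : Finset G) (hA : A.Nonempty) (K : ℝ) (hK : K < 1.5)
    (h : ((A + A).card : ℝ) ≤ K * A.card) :
    ∃ (H : AddSubgroup G) (x : G), (H : Set G).Finite ∧
      (Nat.card H : ℝ) ≤ K * A.card ∧ (A : Set G) ⊆ x +ᵥ (H : Set G) := by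
  obtain ⟨a, ha⟩ := hA
  have hpos : (0 : ℝ) < #A := by exact_mod_cast card_pos.2 ⟨a, ha⟩
  have hdoubling : #(A + A) < (3 / 2 : ℚ) * #A := by
    rw [← Rat.cast_lt (K := ℝ)]
    push_cast
    nlinarith
  obtain ⟨H, hfin, hcard, hsub⟩ :=
    exists_addSubgroup_card_eq_card_add_of_doubling_lt_three_halves hdoubling ha
  exact ⟨H, a, hfin, hcard ▸ h, hsub⟩
end

section
/- (Petridis' lemma) Let G be an Abelian group and A, X finite nonempty subsets of G such that |A+X| ≤ K|X| and |A+X'| ≥ K|X'| for every nonempty subset X' ⊆ X. Then for every finite set C ⊆ G, |A+X+C| ≤ K|X+C|. -/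
/-!
The hypotheses say that `X` minimises the ratio `|A + X'| / |X'|` over its nonempty subsets, with
minimum value `|A + X| / |X| = K`. This is the hypothesis of the Plünnecke–Petridis inequality
`|C + X + A| |X| ≤ |X + A| |C + X|`, whose proof inducts on `C`: adding a point `c` to `C` adds at
most `|A + X| - |A + Y|` new sums, where `Y = {x ∈ X | x + c ∈ X + C}`, and by minimality this is
at most `K (|X| - |Y|)`, the number of new elements of `X + C`.
-/

open Pointwise Finset

theorem Finset.card_add_mul_card_le_of_ratio {G : Type*} [AddCommGroup G] [DecidableEq G]
    {A X : Finset G} {K : ℝ} (h1 : (#(A + X) : ℝ) ≤ K * #X)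
    (h2 : ∀ X' ⊆ X, X'.Nonempty → K * #X' ≤ (#(A + X') : ℝ)) :
    ∀ X' ⊆ X, #(X + A) * #X' ≤ #(X' + A) * #X := by
  intro X' hX'
  obtain rfl | hne := X'.eq_empty_or_nonempty
  · simp
  rw [add_comm X, add_comm X']
  have : (#(A + X) : ℝ) * #X' ≤ #(A + X') * #X :=
    calc (#(A + X) : ℝ) * #X' ≤ K * #X * #X' := by gcongr
      _ = K * #X' * #X := by ring
      _ ≤ #(A + X') * #X := by gcongr; exact h2 X' hX' hne
  exact_mod_cast this

theorem petridis_lemma_general {G : Type*} [AddCommGroup G] [DecidableEq G]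
    (A X : Finset G) (K : ℝ)
    (h1 : ((A + X).card : ℝ) ≤ K * X.card)
    (h2 : ∀ X' ⊆ X, X'.Nonempty → K * X'.card ≤ ((A + X').card : ℝ)) :
    ∀ C : Finset G, ((A + X + C).card : ℝ) ≤ K * (X + C).card := by
  intro C
  obtain rfl | hX := X.eq_empty_or_nonempty
  · simp
  have hPP : (#(C + X + A) : ℝ) * #X ≤ #(X + A) * #(C + X) :=
    mod_cast pluennecke_petridis_inequality_add C (card_add_mul_card_le_of_ratio h1 h2)
  rw [show C + X + A = A + X + C by abel, add_comm X A, add_comm C X] at hPP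
  have hXpos : (0 : ℝ) < #X := mod_cast hX.card_pos
  refine le_of_mul_le_mul_right ?_ hXpos
  calc (#(A + X + C) : ℝ) * #X ≤ #(A + X) * #(X + C) := hPP
    _ ≤ K * #X * #(X + C) := by gcongr
    _ = K * #(X + C) * #X := by ring

theorem petridis_lemma {G : Type*} [AddCommGroup G] [DecidableEq G]
    (A X : Finset G) (hA : A.Nonempty) (hX : X.Nonempty) (K : ℝ) (hK : 0 < K)
    (h1 : ((A + X).card : ℝ) ≤ K * X.card)
    (h2 : ∀ X' ⊆ X, X'.Nonempty → K * X'.card ≤ ((A + X').card : ℝ)) :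
    ∀ C : Finset G, ((A + X + C).card : ℝ) ≤ K * (X + C).card :=
  petridis_lemma_general A X K h1 h2
end

section
/- Let G be an Abelian group and A, B finite nonempty subsets with |A+B| ≤ K|B|. Then there is a nonempty subset X ⊆ B such that |nA + X| ≤ K^n |X| for all natural numbers n ≥ 1, where nA denotes the n-fold sumset A+⋯+A. -/
/-!
Choose a nonempty `X ⊆ B` minimising the ratio `|X + A| / |X|`; this ratio is at most
`|A + B| / |B| ≤ K`. Minimality is exactly the hypothesis of the Plünnecke–Petridis inequality
`|C + X + A| |X| ≤ |X + A| |C + X|`, which applied to `C = nA` lets the ratio multiply up one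
copy of `A` at a time: `|X + nA| ≤ (|X + A| / |X|) ^ n |X|`.
-/

open Pointwise

namespace Finset

variable {G : Type*} [DecidableEq G]

lemma exists_subset_isMin_card_add_div_card [Add G] (A : Finset G) {B : Finset G}
    (hB : B.Nonempty) :
    ∃ X ⊆ B, X.Nonempty ∧
      ∀ Y ⊆ B, Y.Nonempty → (#(X + A) : ℝ) / #X ≤ #(Y + A) / #Y := by
  have hB' : B ∈ B.powerset.erase ∅ :=
    mem_erase_of_ne_of_mem hB.ne_empty (mem_powerset_self B)
  obtain ⟨X, hX, hXmin⟩ :=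
    exists_min_image (B.powerset.erase ∅) (fun Y ↦ (#(Y + A) : ℝ) / #Y) ⟨B, hB'⟩
  rw [mem_erase, mem_powerset, ← nonempty_iff_ne_empty] at hX
  exact ⟨X, hX.2, hX.1, fun Y hYB hY ↦
    hXmin Y (mem_erase_of_ne_of_mem hY.ne_empty (mem_powerset.2 hYB))⟩

lemma card_add_mul_card_le_of_isMin [Add G] {A B X : Finset G} (hX : X.Nonempty) (hXB : X ⊆ B)
    (hmin : ∀ Y ⊆ B, Y.Nonempty → (#(X + A) : ℝ) / #X ≤ #(Y + A) / #Y) :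
    ∀ Y ⊆ X, #(X + A) * #Y ≤ #(Y + A) * #X := by
  intro Y hYX
  obtain rfl | hY := Y.eq_empty_or_nonempty
  · simp
  have hXpos : (0 : ℝ) < #X := mod_cast hX.card_pos
  have hYpos : (0 : ℝ) < #Y := mod_cast hY.card_pos
  exact mod_cast (div_le_div_iff₀ hXpos hYpos).1 (hmin Y (hYX.trans hXB) hY)

lemma card_add_nsmul_le [AddCommGroup G] {A X : Finset G}
    (hX : ∀ Y ⊆ X, #(X + A) * #Y ≤ #(Y + A) * #X) (n : ℕ) :
    (#(X + n • A) : ℝ) ≤ ((#(X + A) : ℝ) / #X) ^ n * #X := by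
  obtain rfl | hXne := X.eq_empty_or_nonempty
  · simp
  have hXpos : (0 : ℝ) < #X := mod_cast hXne.card_pos
  induction n with
  | zero => simp
  | succ n ih =>
    refine le_of_mul_le_mul_right ?_ hXpos
    calc (#(X + (n + 1) • A) : ℝ) * #X
        = #(n • A + X + A) * #X := by rw [succ_nsmul, add_comm (n • A) X, add_assoc]
      _ ≤ #(X + A) * #(n • A + X) := mod_cast pluennecke_petridis_inequality_add (n • A) hX
      _ ≤ #(X + A) * (((#(X + A) : ℝ) / #X) ^ n * #X) := by
        rw [add_comm (n • A) X]; gcongr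
      _ = ((#(X + A) : ℝ) / #X) ^ (n + 1) * #X * #X := by rw [pow_succ]; field_simp

end Finset

open Finset

theorem petridis_corollary_general {G : Type*} [AddCommGroup G] [DecidableEq G]
    (A B : Finset G) (hB : B.Nonempty) (K : ℝ)
    (h : ((A + B).card : ℝ) ≤ K * B.card) :
    ∃ X ⊆ B, X.Nonempty ∧ ∀ n : ℕ, 1 ≤ n →
      ((n • A + X).card : ℝ) ≤ K ^ n * X.card := by
  obtain ⟨X, hXB, hX, hmin⟩ := exists_subset_isMin_card_add_div_card A hB
  have hratio : (#(X + A) : ℝ) / #X ≤ K := by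
    refine (hmin B subset_rfl hB).trans ?_
    rw [div_le_iff₀ (mod_cast hB.card_pos), add_comm B A]
    exact h
  refine ⟨X, hXB, hX, fun n _ ↦ ?_⟩
  calc (#(n • A + X) : ℝ) = #(X + n • A) := by rw [add_comm]
    _ ≤ ((#(X + A) : ℝ) / #X) ^ n * #X :=
      card_add_nsmul_le (card_add_mul_card_le_of_isMin hX hXB hmin) n
    _ ≤ K ^ n * #X := by gcongr

theorem petridis_corollary {G : Type*} [AddCommGroup G] [DecidableEq G]
    (A B : Finset G) (hA : A.Nonempty) (hB : B.Nonempty) (K : ℝ) (hK : 0 < K)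
    (h : ((A + B).card : ℝ) ≤ K * B.card) :
    ∃ X ⊆ B, X.Nonempty ∧ ∀ n : ℕ, 1 ≤ n →
      ((n • A + X).card : ℝ) ≤ K ^ n * X.card :=
  petridis_corollary_general A B hB K h
end

section
/- (Plünnecke's inequality) Let G be an Abelian group and A a finite nonempty subset with |A+A| ≤ K|A|. Then |nA| ≤ K^n |A| for all natural numbers n ≥ 1. -/
open Pointwise

theorem plunnecke_inequality {G : Type*} [AddCommGroup G] [DecidableEq G]
    (A : Finset G) (hA : A.Nonempty) (K : ℝ) (hK : 1 ≤ K)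
    (h : ((A + A).card : ℝ) ≤ K * A.card) :
    ∀ n : ℕ, 1 ≤ n → ((n • A).card : ℝ) ≤ K ^ n * A.card := by
  intro n _
  have key := Finset.pluennecke_ruzsa_inequality_nsmul_add hA A n
  have hA0 : (0 : ℝ) < A.card := by exact_mod_cast Finset.card_pos.2 hA
  have key' : ((n • A).card : ℝ) ≤ ((A + A).card / A.card) ^ n * A.card := by
    have := (NNRat.cast_le (K := ℝ)).2 key
    push_cast at this
    exact_mod_cast this
  refine key'.trans ?_
  have hd : ((A + A).card : ℝ) / A.card ≤ K := by rw [div_le_iff₀ hA0]; exact h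
  gcongr
end

section
/- (Plünnecke–Ruzsa inequalities) Let G be an Abelian group and A a finite nonempty subset with |A+A| ≤ K|A|. Then |nA − mA| ≤ K^{n+m} |A| for all natural numbers n, m ≥ 1. -/
open Pointwise

theorem plunnecke_ruzsa_inequalities {G : Type*} [AddCommGroup G] [DecidableEq G]
    (A : Finset G) (hA : A.Nonempty) (K : ℝ) (hK : 1 ≤ K)
    (h : ((A + A).card : ℝ) ≤ K * A.card) :
    ∀ n m : ℕ, 1 ≤ n → 1 ≤ m →
      ((n • A - m • A).card : ℝ) ≤ K ^ (n + m) * A.card := by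
  intro n m _ _
  have key := Finset.pluennecke_ruzsa_inequality_nsmul_sub_nsmul_add hA A n m
  have hA0 : (0 : ℝ) < A.card := by exact_mod_cast hA.card_pos
  have key2 := (NNRat.cast_le (K := ℝ)).2 key
  push_cast at key2
  refine key2.trans ?_
  gcongr
  rw [div_le_iff₀ hA0]
  exact h
end

section
/- (Freiman–Ruzsa theorem for bounded exponent) Let G be an Abelian group of exponent r (every element has order dividing r) and A a finite nonempty subset with |A+A| ≤ K|A|. Then the subgroup ⟨A⟩ generated by A is finite and satisfies |⟨A⟩| ≤ K^2 · r^{K^4} · |A|. -/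
/-!
By Plünnecke–Ruzsa, `|A - A| ≤ K²|A|` and `|A + A - A + A| ≤ K⁴|A|`, so Ruzsa's covering
lemma gives `T` with `|T| ≤ K⁴` and `A + A - A ⊆ T + (A - A)`. With `H = ⟨T⟩`, the set
`H + (A - A)` contains `0` and is stable under adding elements of `A`; as every element has
finite order, `⟨A⟩` is the submonoid generated by `A`, hence lies in `H + (A - A)`. Finally `H`
is the image of `(ZMod r)^T`, so `|H| ≤ r^|T|`.
-/

open Pointwise

lemma Finset.card_nsmul_sub_nsmul_le {G : Type*} [AddCommGroup G] [DecidableEq G]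
    {A : Finset G} (hA : A.Nonempty) {K : ℝ} (hK : ((A + A).card : ℝ) ≤ K * A.card)
    (m n : ℕ) :
    ((m • A - n • A).card : ℝ) ≤ K ^ (m + n) * A.card := by
  have hA₀ : (0 : ℝ) < A.card := by exact_mod_cast hA.card_pos
  have hPR := (NNRat.cast_le (K := ℝ)).2 <|
    pluennecke_ruzsa_inequality_nsmul_sub_nsmul_add hA A m n
  push_cast at hPR
  exact hPR.trans (by gcongr; rwa [div_le_iff₀ hA₀])

namespace AddSubgroup

variable {G : Type*} [AddCommGroup G]

lemma closure_finset_subset_range_sum_smul (R : Type*) [Ring R] [Module R G] (s : Finset G) :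
    (closure (s : Set G) : Set G) ⊆ Set.range fun c : s → R ↦ ∑ i, c i • (i : G) := by
  intro x hx
  obtain ⟨a, rfl⟩ := mem_closure_iff_of_fintype.1 hx
  exact ⟨fun i ↦ a i, Finset.sum_congr rfl fun i _ ↦ Int.cast_smul_eq_zsmul R (a i) _⟩

lemma finite_closure_finset (R : Type*) [Ring R] [Finite R] [Module R G] (s : Finset G) :
    (closure (s : Set G) : Set G).Finite :=
  (Set.finite_range _).subset (closure_finset_subset_range_sum_smul R s)

lemma natCard_closure_finset_le (R : Type*) [Ring R] [Finite R] [Module R G] (s : Finset G) :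
    Nat.card (closure (s : Set G)) ≤ Nat.card R ^ s.card :=
  calc Nat.card (closure (s : Set G))
      ≤ Nat.card (Set.range fun c : s → R ↦ ∑ i, c i • (i : G)) :=
        Nat.card_mono (Set.finite_range _) (closure_finset_subset_range_sum_smul R s)
    _ ≤ Nat.card (s → R) := Finite.card_range_le _
    _ = Nat.card R ^ s.card := by simp [Nat.card_fun]

lemma closure_subset_add_sub_of_add_sub_subset {A : Set G} (hA : A.Nonempty)
    (hA_fin : ∀ a ∈ A, IsOfFinAddOrder a) (H : AddSubgroup G)
    (hcov : A + A - A ⊆ H + (A - A)) : (closure A : Set G) ⊆ H + (A - A) := by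
  intro x hx
  replace hx : x ∈ AddSubmonoid.closure A := by
    rwa [← closure_toAddSubmonoid_of_isOfFinAddOrder hA_fin]
  induction hx using AddSubmonoid.closure_induction_left with
  | zero =>
    obtain ⟨a, ha⟩ := hA
    exact ⟨0, H.zero_mem, a - a, Set.sub_mem_sub ha ha, by simp⟩
  | add_left a ha y _ hy =>
    have hstable : A + ((H : Set G) + (A - A)) ⊆ H + (A - A) :=
      calc A + ((H : Set G) + (A - A)) = H + (A + A - A) := by rw [add_left_comm, add_sub_assoc]
        _ ⊆ H + (H + (A - A)) := by gcongr
        _ = H + (A - A) := by rw [← add_assoc, coe_add_coe]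
    exact hstable (Set.add_mem_add ha hy)

lemma exists_closure_subset_closure_add_sub [DecidableEq G] {A : Finset G} (hA : A.Nonempty)
    (hA_fin : ∀ a ∈ A, IsOfFinAddOrder a)
    {K : ℝ} (h : ((A + A).card : ℝ) ≤ K * A.card) :
    ∃ T : Finset G, (T.card : ℝ) ≤ K ^ 4 ∧
      (closure (A : Set G) : Set G) ⊆ closure (T : Set G) + ↑(A - A) := by
  have hAAAA : ((A + A - A + A).card : ℝ) ≤ K ^ 4 * A.card := by
    simpa [succ_nsmul, sub_add_eq_add_sub] using A.card_nsmul_sub_nsmul_le hA h 3 1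
  obtain ⟨T, -, hT, hcov⟩ := Finset.ruzsa_covering_add hA hAAAA
  refine ⟨T, hT, ?_⟩
  rw [Finset.coe_sub]
  refine closure_subset_add_sub_of_add_sub_subset hA hA_fin _ ?_
  rw [← Finset.coe_subset] at hcov
  push_cast at hcov
  exact hcov.trans (Set.add_subset_add_right subset_closure)

end AddSubgroup

theorem freiman_ruzsa_bounded_exponent_general {G : Type*} [AddCommGroup G] [DecidableEq G]
    (r : ℕ) (hr : 0 < r) (hexp : ∀ x : G, r • x = 0)
    (A : Finset G) (hA : A.Nonempty) (K : ℝ)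
    (h : ((A + A).card : ℝ) ≤ K * A.card) :
    ((AddSubgroup.closure (A : Set G) : Set G)).Finite ∧
      (Nat.card (AddSubgroup.closure (A : Set G)) : ℝ) ≤
        K ^ 2 * (r : ℝ) ^ (K ^ 4 : ℝ) * A.card := by
  have : NeZero r := ⟨hr.ne'⟩
  let : Module (ZMod r) G := AddCommGroup.zmodModule hexp
  obtain ⟨T, hT, hsub⟩ := AddSubgroup.exists_closure_subset_closure_add_sub hA
    (fun a _ ↦ isOfFinAddOrder_iff_nsmul_eq_zero.2 ⟨r, hr, hexp a⟩) h
  set H := AddSubgroup.closure (T : Set G)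
  set D : Set G := ↑(A - A) with hD
  have hfin : ((H : Set G) + D).Finite :=
    (AddSubgroup.finite_closure_finset (ZMod r) T).add (A - A).finite_toSet
  have hH : (Nat.card H : ℝ) ≤ (r : ℝ) ^ (K ^ 4 : ℝ) :=
    calc (Nat.card H : ℝ) ≤ (r : ℝ) ^ T.card := by
          exact_mod_cast (AddSubgroup.natCard_closure_finset_le (ZMod r) T).trans_eq (by simp)
      _ ≤ (r : ℝ) ^ (K ^ 4 : ℝ) := by
          rw [← Real.rpow_natCast]
          exact Real.rpow_le_rpow_of_exponent_le (by exact_mod_cast hr) hT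
  have hAA : ((A - A).card : ℝ) ≤ K ^ 2 * A.card := by
    simpa using A.card_nsmul_sub_nsmul_le hA h 1 1
  refine ⟨hfin.subset hsub, ?_⟩
  calc (Nat.card (AddSubgroup.closure (A : Set G)) : ℝ)
      ≤ Nat.card ((H : Set G) + D) := by exact_mod_cast Nat.card_mono hfin hsub
    _ ≤ Nat.card H * (A - A).card := by
        exact_mod_cast Set.natCard_add_le.trans_eq
          (by rw [SetLike.coe_sort_coe, hD, Nat.card_coe_set_eq, Set.ncard_coe_finset])
    _ ≤ (r : ℝ) ^ (K ^ 4 : ℝ) * (K ^ 2 * A.card) := by gcongr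
    _ = K ^ 2 * (r : ℝ) ^ (K ^ 4 : ℝ) * A.card := by ring

theorem freiman_ruzsa_bounded_exponent {G : Type*} [AddCommGroup G] [DecidableEq G]
    (r : ℕ) (hr : 0 < r) (hexp : ∀ x : G, r • x = 0)
    (A : Finset G) (hA : A.Nonempty) (K : ℝ) (hK : 1 ≤ K)
    (h : ((A + A).card : ℝ) ≤ K * A.card) :
    ((AddSubgroup.closure (A : Set G) : Set G)).Finite ∧
      (Nat.card (AddSubgroup.closure (A : Set G)) : ℝ) ≤
        K ^ 2 * (r : ℝ) ^ (K ^ 4 : ℝ) * A.card :=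
  freiman_ruzsa_bounded_exponent_general r hr hexp A hA K h
end

section
/- Let G be an Abelian group, X a finite nonempty subset with relative polynomial growth of order d (|nX| ≤ n^d|X| for all n ≥ 1), and A a finite set with |A+X| ≤ K|X|. Then there is a set T of size at most K with A ⊆ T + (X−X), and X−X is a symmetric set containing 0 with relative polynomial growth of order at most 2d+1 (up to an absolute constant factor). -/
open Pointwise

private lemma nsmul_sub_subset {G : Type*} [AddCommGroup G] [DecidableEq G]
    (X : Finset G) (n : ℕ) (hn : 1 ≤ n) : n • (X - X) ⊆ n • X - n • X := by
  induction n with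
  | zero => omega
  | succ m ih =>
    rcases Nat.eq_or_lt_of_le hn with h1 | h2
    · simp [← h1]
    · have hm : 1 ≤ m := by omega
      have := ih hm
      calc (m + 1) • (X - X) = m • (X - X) + (X - X) := by
            rw [succ_nsmul]
        _ ⊆ (m • X - m • X) + (X - X) := by
            exact Finset.add_subset_add_right (ih hm)
        _ ⊆ (m + 1) • X - (m + 1) • X := by
            intro x hx
            rw [Finset.mem_add] at hx
            obtain ⟨a, ha, b, hb, rfl⟩ := hx
            rw [Finset.mem_sub] at ha hb ⊢
            obtain ⟨a1, ha1, a2, ha2, rfl⟩ := ha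
            obtain ⟨b1, hb1, b2, hb2, rfl⟩ := hb
            refine ⟨a1 + b1, ?_, a2 + b2, ?_, by abel⟩
            · rw [succ_nsmul]; exact Finset.add_mem_add ha1 hb1
            · rw [succ_nsmul]; exact Finset.add_mem_add ha2 hb2

theorem covering_by_difference_set {G : Type*} [AddCommGroup G] [DecidableEq G]
    (X A : Finset G) (hX : X.Nonempty) (d K : ℝ) (hd : 0 < d) (hK : 1 ≤ K)
    (hgrowth : ∀ n : ℕ, 1 ≤ n → ((n • X).card : ℝ) ≤ (n : ℝ) ^ d * X.card)
    (h : ((A + X).card : ℝ) ≤ K * X.card) :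
    ∃ T : Finset G, (T.card : ℝ) ≤ K ∧ A ⊆ T + (X - X) ∧
      X - X = -(X - X) ∧ (0 : G) ∈ X - X ∧
      ∃ C : ℝ, 0 < C ∧ ∀ n : ℕ, 1 ≤ n →
        ((n • (X - X)).card : ℝ) ≤ (n : ℝ) ^ (C * (2 * d + 1)) * (X - X).card := by
  obtain ⟨T, hTA, hTcard, hcover⟩ := Finset.ruzsa_covering_add hX h
  obtain ⟨x0, hx0⟩ := hX
  have hXpos : (0 : ℝ) < X.card := by exact_mod_cast Finset.card_pos.2 ⟨x0, hx0⟩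
  have hX1 : (1 : ℝ) ≤ X.card := by exact_mod_cast Finset.card_pos.2 ⟨x0, hx0⟩
  refine ⟨T, hTcard, hcover, ?_, ?_, ?_⟩
  · ext g
    simp only [Finset.mem_neg, Finset.mem_sub]
    constructor
    · rintro ⟨a, ha, b, hb, rfl⟩
      exact ⟨b - a, ⟨b, hb, a, ha, rfl⟩, by abel⟩
    · rintro ⟨y, ⟨a, ha, b, hb, rfl⟩, rfl⟩
      exact ⟨b, hb, a, ha, by abel⟩
  · exact Finset.mem_sub.2 ⟨x0, hx0, x0, hx0, sub_self x0⟩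
  · set L : ℝ := Real.logb 2 X.card with hL
    have hLnn : 0 ≤ L := Real.logb_nonneg one_lt_two hX1
    have h2d1 : (0 : ℝ) < 2 * d + 1 := by linarith
    refine ⟨max 1 ((2 * d + L) / (2 * d + 1)), lt_of_lt_of_le one_pos (le_max_left _ _),
      fun n hn => ?_⟩
    set C : ℝ := max 1 ((2 * d + L) / (2 * d + 1))
    have hCexp : 2 * d + L ≤ C * (2 * d + 1) := by
      have : (2 * d + L) / (2 * d + 1) ≤ C := le_max_right _ _
      calc 2 * d + L = ((2 * d + L) / (2 * d + 1)) * (2 * d + 1) := by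
            field_simp
        _ ≤ C * (2 * d + 1) := by nlinarith
    have hXXpos : (0 : ℝ) < (X - X).card :=
      lt_of_lt_of_le hXpos (by exact_mod_cast Finset.card_le_card_sub_self)
    rcases Nat.eq_or_lt_of_le hn with h1 | h2
    · -- n = 1
      rw [← h1, one_nsmul]
      norm_num [Real.one_rpow]
    · -- n ≥ 2
      have hn2 : (2 : ℝ) ≤ (n : ℝ) := by exact_mod_cast h2
      have hn1 : (1 : ℝ) ≤ (n : ℝ) := by linarith
      have hnpos : (0 : ℝ) < (n : ℝ) := by linarith
      -- card (n • (X - X)) ≤ card (n • X) ^ 2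
      have step1 : ((n • (X - X)).card : ℝ) ≤ ((n • X).card : ℝ) * ((n • X).card : ℝ) := by
        have hsub := nsmul_sub_subset X n hn
        have hc1 : (n • (X - X)).card ≤ (n • X - n • X).card := Finset.card_le_card hsub
        have hc2 : (n • X - n • X).card ≤ (n • X).card * (n • X).card := by
          rw [sub_eq_add_neg]
          calc (n • X + -(n • X)).card ≤ (n • X).card * (-(n • X)).card :=
                Finset.card_add_le
            _ = (n • X).card * (n • X).card := by rw [Finset.card_neg]
        exact_mod_cast hc1.trans hc2
      have step2 : ((n • X).card : ℝ) * ((n • X).card : ℝ) ≤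
          (n : ℝ) ^ (2 * d) * ((X.card : ℝ) * X.card) := by
        have hg := hgrowth n hn
        have hnX0 : (0 : ℝ) ≤ ((n • X).card : ℝ) := Nat.cast_nonneg _
        have hrp : (0 : ℝ) ≤ (n : ℝ) ^ d := Real.rpow_nonneg (le_of_lt hnpos) d
        calc ((n • X).card : ℝ) * ((n • X).card : ℝ)
            ≤ ((n : ℝ) ^ d * X.card) * ((n : ℝ) ^ d * X.card) := by nlinarith
          _ = (n : ℝ) ^ (2 * d) * ((X.card : ℝ) * X.card) := by
              rw [two_mul, Real.rpow_add hnpos]; ring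
      have step3 : (n : ℝ) ^ (2 * d) * (X.card : ℝ) ≤ (n : ℝ) ^ (C * (2 * d + 1)) := by
        have hXeq : (X.card : ℝ) = (2 : ℝ) ^ L := by
          rw [hL, Real.rpow_logb two_pos (by norm_num) hXpos]
        calc (n : ℝ) ^ (2 * d) * (X.card : ℝ) = (n : ℝ) ^ (2 * d) * (2 : ℝ) ^ L := by
              rw [hXeq]
          _ ≤ (n : ℝ) ^ (2 * d) * (n : ℝ) ^ L := by
              have : (2 : ℝ) ^ L ≤ (n : ℝ) ^ L :=
                Real.rpow_le_rpow (by norm_num) hn2 hLnn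
              have hrp : (0 : ℝ) ≤ (n : ℝ) ^ (2 * d) := Real.rpow_nonneg hnpos.le _
              nlinarith
          _ = (n : ℝ) ^ (2 * d + L) := (Real.rpow_add hnpos _ _).symm
          _ ≤ (n : ℝ) ^ (C * (2 * d + 1)) :=
              Real.rpow_le_rpow_of_exponent_le hn1 hCexp
      have hXle : (X.card : ℝ) ≤ ((X - X).card : ℝ) := by
        exact_mod_cast Finset.card_le_card_sub_self
      calc ((n • (X - X)).card : ℝ)
          ≤ (n : ℝ) ^ (2 * d) * ((X.card : ℝ) * X.card) := step1.trans step2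
        _ = ((n : ℝ) ^ (2 * d) * (X.card : ℝ)) * (X.card : ℝ) := by ring
        _ ≤ (n : ℝ) ^ (C * (2 * d + 1)) * (X.card : ℝ) :=
            mul_le_mul_of_nonneg_right step3 hXpos.le
        _ ≤ (n : ℝ) ^ (C * (2 * d + 1)) * ((X - X).card : ℝ) :=
            mul_le_mul_of_nonneg_left hXle (Real.rpow_nonneg hnpos.le _)
end

section
/- Let G be a finite Abelian group, X a nonempty subset, and k ≥ 1 a natural number. Then Σ_{γ∈Ĝ} |1̂_X(γ)|^{2k} ≥ |G| · |X|^{2k} / |kX|, where 1̂_X(γ) = Σ_{x∈G} 1_X(x) conj(γ(x)) and kX is the k-fold sumset. -/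
open Pointwise

/-!
Let `r(s)` count the ways of writing `s` as a sum of `k` elements of `X`. Then
`(∑ x ∈ X, γ x) ^ k = ∑ s, r(s) γ(s)`, so by Parseval `∑_γ |1̂_X(γ)|^{2k} = |G| ∑ s, r(s)^2`.
Since `r` is supported on `kX` and has total mass `|X|^k`, Cauchy–Schwarz gives
`|X|^{2k} ≤ |kX| ∑ s, r(s)^2`.
-/

open Finset ComplexConjugate

lemma AddChar.map_sum_eq_prod {ι A M : Type*} [AddCommMonoid A] [CommMonoid M]
    (ψ : AddChar A M) (s : Finset ι) (f : ι → A) : ψ (∑ i ∈ s, f i) = ∏ i ∈ s, ψ (f i) := by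
  induction s using Finset.cons_induction with
  | empty => simp
  | cons i s hi ih => rw [sum_cons, prod_cons, map_add_eq_mul, ih]

section Parseval

variable {G : Type*} [AddCommGroup G] [Fintype G] [DecidableEq G] [Fintype (AddChar G ℂ)]

/-- `AddChar.sum_apply_eq_ite` for an arbitrary `Fintype` instance on the dual group. -/
lemma sum_addChar_apply_eq_ite (a : G) :
    ∑ γ : AddChar G ℂ, γ a = if a = 0 then (Fintype.card G : ℂ) else 0 := by
  convert AddChar.sum_apply_eq_ite a

theorem sum_norm_sq_sum_mul_addChar (S : Finset G) (f : G → ℂ) :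
    ∑ γ : AddChar G ℂ, ‖∑ s ∈ S, f s * γ s‖ ^ 2 = Fintype.card G * ∑ s ∈ S, ‖f s‖ ^ 2 := by
  apply Complex.ofReal_injective
  push_cast
  simp_rw [← Complex.mul_conj']
  calc ∑ γ : AddChar G ℂ, (∑ s ∈ S, f s * γ s) * conj (∑ t ∈ S, f t * γ t)
      = ∑ s ∈ S, ∑ t ∈ S, f s * conj (f t) * ∑ γ : AddChar G ℂ, γ (s - t) := by
        simp_rw [map_sum, sum_mul_sum, mul_sum, map_mul, ← AddChar.map_neg_eq_conj, sub_eq_add_neg,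
          AddChar.map_add_eq_mul]
        rw [sum_comm]
        refine sum_congr rfl fun s _ ↦ ?_
        rw [sum_comm]
        refine sum_congr rfl fun t _ ↦ sum_congr rfl fun γ _ ↦ ?_
        ring
    _ = Fintype.card G * ∑ s ∈ S, f s * conj (f s) := by
        simp_rw [sum_addChar_apply_eq_ite, sub_eq_zero, mul_ite, mul_zero, sum_ite_eq, mul_sum]
        refine sum_congr rfl fun s hs ↦ ?_
        simp [hs, mul_comm]

end Parseval

section SumReps

variable {G : Type*} [AddCommMonoid G] [DecidableEq G]

def sumReps (X : Finset G) (k : ℕ) (s : G) : ℕ :=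
  #{p ∈ Fintype.piFinset fun _ : Fin k ↦ X | ∑ i, p i = s}

lemma Finset.sum_mem_nsmul {X : Finset G} {k : ℕ} {p : Fin k → G} (hp : ∀ i, p i ∈ X) :
    ∑ i, p i ∈ k • X := by
  rw [← mem_coe, coe_nsmul]
  exact Set.mem_nsmul_iff_sum.2 ⟨p, hp, rfl⟩

lemma sum_sumReps (X : Finset G) (k : ℕ) : ∑ s ∈ k • X, sumReps X k s = #X ^ k := by
  rw [← Fintype.card_piFinset_const X k]
  exact (card_eq_sum_card_fiberwise fun p hp ↦ sum_mem_nsmul (Fintype.mem_piFinset.1 hp)).symm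

lemma AddChar.sum_pow_eq_sum_sumReps {R : Type*} [CommSemiring R] (γ : AddChar G R)
    (X : Finset G) (k : ℕ) : (∑ x ∈ X, γ x) ^ k = ∑ s ∈ k • X, sumReps X k s * γ s := by
  rw [sum_pow', ← sum_fiberwise_of_maps_to fun p hp ↦ sum_mem_nsmul (Fintype.mem_piFinset.1 hp)]
  refine sum_congr rfl fun s _ ↦ ?_
  rw [sumReps, ← nsmul_eq_mul, ← sum_const]
  refine sum_congr rfl fun p hp ↦ ?_
  rw [← (mem_filter.1 hp).2, map_sum_eq_prod]

end SumReps

theorem fourier_moment_lower_bound_general {G : Type*} [AddCommGroup G] [Fintype G]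
    [DecidableEq G] [Fintype (AddChar G ℂ)]
    (X : Finset G) (k : ℕ) :
    (Fintype.card G : ℝ) * (X.card : ℝ) ^ (2 * k) / ((k • X).card : ℝ) ≤
      ∑ γ : AddChar G ℂ, ‖∑ x ∈ X, (starRingEnd ℂ) (γ x)‖ ^ (2 * k) := by
  have moment (γ : AddChar G ℂ) : ‖∑ x ∈ X, conj (γ x)‖ ^ (2 * k) =
      ‖∑ s ∈ k • X, (sumReps X k s : ℂ) * γ s‖ ^ 2 := by
    rw [← map_sum, Complex.norm_conj, pow_mul', ← norm_pow, γ.sum_pow_eq_sum_sumReps]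
  have cauchySchwarz : ((#X : ℝ) ^ k) ^ 2 ≤ #(k • X) * ∑ s ∈ k • X, (sumReps X k s : ℝ) ^ 2 := by
    exact_mod_cast sum_sumReps X k ▸ sq_sum_le_card_mul_sum_sq
  refine div_le_of_le_mul₀ (by positivity) (by positivity) ?_
  simp only [moment, sum_norm_sq_sum_mul_addChar, Complex.norm_natCast, pow_mul']
  rw [mul_assoc]
  gcongr
  exact cauchySchwarz.trans_eq (mul_comm _ _)

/-- Moment lower bound for the Fourier transform of an indicator:
`∑_γ |1̂_X(γ)|^{2k} ≥ |G| |X|^{2k} / |kX|`. -/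
theorem fourier_moment_lower_bound {G : Type*} [AddCommGroup G] [Fintype G]
    [DecidableEq G] [Fintype (AddChar G ℂ)]
    (X : Finset G) (hX : X.Nonempty) (k : ℕ) (hk : 1 ≤ k) :
    (Fintype.card G : ℝ) * (X.card : ℝ) ^ (2 * k) / ((k • X).card : ℝ) ≤
      ∑ γ : AddChar G ℂ, ‖∑ x ∈ X, (starRingEnd ℂ) (γ x)‖ ^ (2 * k) :=
  fourier_moment_lower_bound_general X k
end
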